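/- arXiv:2005.04406 — 2 statements merged into one kernel-verified Lean document; each statement's English description precedes it below -/
import Mathlib

section
/- Let ν be a valuation on K[x], let f ∈ K[x] be a monic non-constant polynomial with ν(f) < ∞, let Z(f) be the multiset of roots of f (with multiplicity) in a fixed algebraic closure K̄ of K, and let ν̄ be any valuation on K̄[x] with values in Λ ∪ {∞} whose restriction to K[x] is ν. Then ε(f) = max{ν̄(x − θ) : θ ∈ Z(f)}, and moreover the multiplicity of the value ε(f) in the multiset {ν̄(x − θ) : θ ∈ Z(f)} is equal to max(I(f)). -/
/-!
Over `K̄` the polynomial splits as `f = ∏ (x - θ)`, and Hasse derivatives commute with base change,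
so `ν (∂_b f) = ν̄ (∂_b f)`. For `Γ ∈ Λ`, `ν̄ (∂_b P) + b Γ` is the value of the `b`-th term of the
Taylor expansion `P (x + y) = Σ_b ∂_b P · y ^ b` at an increment `y` of value `Γ`. Take `Γ` the
largest `ν̄ (x - θ)` and `d` its multiplicity. Peeling off one linear factor at a time with
`∂_{k+1} ((x - θ) P) = (x - θ) ∂_{k+1} P + ∂_k P`, induction shows that the Taylor term of index `0`
has the least value and that `d` is the last index attaining it: a factor with `ν̄ (x - θ) = Γ` moves
the last index up by one, a factor with `ν̄ (x - θ) < Γ` leaves it in place. Over `K` this says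
exactly that `ε(f) = Γ` and `max I(f) = d`.
-/

open Polynomial

namespace KeyPolPaper

variable {K : Type*} [Field K] {Λ : Type*} [AddCommGroup Λ] [LinearOrder Λ] [IsOrderedAddMonoid Λ]

/-- A valuation on `F[X]` with values in `Λ ∪ {∞}`: multiplicative, satisfies the
ultrametric inequality, and is finite on nonzero constants. -/
def IsValuation {F : Type*} [Field F] (w : F[X] → WithTop Λ) : Prop :=
  w 0 = ⊤ ∧ (∀ f g : F[X], w (f * g) = w f + w g) ∧
    (∀ f g : F[X], min (w f) (w g) ≤ w (f + g)) ∧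
    ∀ a : F, a ≠ 0 → w (C a) ≠ ⊤

/-- `μ ≤ ν` for valuations on `K[X]`. -/
def ValLE (μ ν : K[X] → WithTop Λ) : Prop := ∀ f : K[X], μ f ≤ ν f

/-- `μ < ν` for valuations on `K[X]`. -/
def ValLT (μ ν : K[X] → WithTop Λ) : Prop := ValLE μ ν ∧ μ ≠ ν

/-- ν-equivalence: `f ∼_ν g` iff `ν (f - g) > ν f`. -/
def VEquiv (ν : K[X] → WithTop Λ) (f g : K[X]) : Prop := ν f < ν (f - g)

/-- ν-divisibility: `h ∣_ν g` iff `g ∼_ν q * h` for some `q`. -/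
def VDvd (ν : K[X] → WithTop Λ) (h g : K[X]) : Prop := ∃ q : K[X], VEquiv ν g (q * h)

/-- MacLane–Vaquié key polynomial: monic, ν-minimal and ν-irreducible. -/
def IsMLVKey (ν : K[X] → WithTop Λ) (φ : K[X]) : Prop :=
  φ.Monic ∧ (∀ f : K[X], f ≠ 0 → f.natDegree < φ.natDegree → ¬ VDvd ν φ f) ∧
    ¬ VDvd ν φ 1 ∧ ∀ f g : K[X], VDvd ν φ (f * g) → VDvd ν φ f ∨ VDvd ν φ g

/-- `e` is the value `ε(f) = max_{b ≥ 1} (ν f - ν (∂_b f)) / b`; phrased multiplicatively,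
`e` satisfies `ν f ≤ ν (∂_b f) + b • e` for all `b ≥ 1`, with equality for some `b ≥ 1`.
If `ν f = ∞` then `ε(f) = ∞`. -/
def IsEps (ν : K[X] → WithTop Λ) (f : K[X]) (e : WithTop Λ) : Prop :=
  (ν f = ⊤ ∧ e = ⊤) ∨
    (ν f ≠ ⊤ ∧ (∀ b : ℕ, 1 ≤ b → ν f ≤ ν (hasseDeriv b f) + b • e) ∧
      ∃ b : ℕ, 1 ≤ b ∧ ν f = ν (hasseDeriv b f) + b • e)

/-- The invariant `ε(f)`; well defined (for non-constant `f`) since `Λ` is divisible and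
the defining property determines `e` uniquely. -/
noncomputable def eps (ν : K[X] → WithTop Λ) (f : K[X]) : WithTop Λ :=
  letI := Classical.propDecidable (∃ e : WithTop Λ, IsEps ν f e)
  if h : ∃ e : WithTop Λ, IsEps ν f e then h.choose else ⊤

/-- The set `I(f)` of indices `b ≥ 1` with `ν (∂_b f) = ν f - b • ε(f)`. -/
def epsAttain (ν : K[X] → WithTop Λ) (f : K[X]) : Set ℕ :=
  {b : ℕ | 1 ≤ b ∧ ν f = ν (hasseDeriv b f) + b • eps ν f}

/-- Abstract key polynomial for `ν`. -/
def IsKeyPoly (ν : K[X] → WithTop Λ) (Q : K[X]) : Prop :=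
  Q.Monic ∧ 0 < Q.natDegree ∧
    ∀ f : K[X], 0 < f.natDegree → f.natDegree < Q.natDegree → eps ν f < eps ν Q

/-- The `s`-th coefficient of the canonical `Q`-expansion `f = Σ_s a_s Q^s`,
`deg a_s < deg Q`. -/
noncomputable def qCoeff (Q f : K[X]) (s : ℕ) : K[X] := ((· /ₘ Q)^[s] f) %ₘ Q

/-- The truncation `ν_Q (f) = min_s ν (a_s Q^s)`. -/
noncomputable def trunc (ν : K[X] → WithTop Λ) (Q f : K[X]) : WithTop Λ :=
  (Finset.range (f.natDegree + 1)).inf fun s => ν (qCoeff Q f s * Q ^ s)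

/-- `S_{ν,Q}(f)`: the set of indices attaining the minimum in `ν_Q(f)`. -/
def attain (ν : K[X] → WithTop Λ) (Q f : K[X]) : Set ℕ :=
  {s : ℕ | ν (qCoeff Q f s * Q ^ s) = trunc ν Q f}

/-- The augmented valuation `[μ; φ, γ] (f) = min_s (μ (a_s) + s • γ)` on φ-expansions. -/
noncomputable def augVal (μ : K[X] → WithTop Λ) (φ : K[X]) (γ : WithTop Λ) (f : K[X]) :
    WithTop Λ :=
  (Finset.range (f.natDegree + 1)).inf fun s => μ (qCoeff φ f s) + s • γ

/-- `Φ_{μ,ν}`: monic polynomials of minimal degree with `μ φ < ν φ`. -/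
def PhiSet (μ ν : K[X] → WithTop Λ) : Set K[X] :=
  {φ : K[X] | φ.Monic ∧ μ φ < ν φ ∧
    ∀ ψ : K[X], ψ.Monic → μ ψ < ν ψ → φ.natDegree ≤ ψ.natDegree}

/-- `mult f`: the least `b ≥ 1` with `∂_b f ≠ 0`. -/
noncomputable def multOf (f : K[X]) : ℕ := sInf {b : ℕ | 1 ≤ b ∧ hasseDeriv b f ≠ 0}

/-- Abstract limit key polynomial for `ν` (conditions (K1)-(K4)). -/
def IsLimitKeyPoly (ν : K[X] → WithTop Λ) (Q : K[X]) : Prop :=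
  Q.Monic ∧
    ∃ Qm : K[X], IsKeyPoly ν Qm ∧ ValLT (trunc ν Qm) ν ∧
      (∃ χ ∈ PhiSet (trunc ν Qm) ν, Qm.natDegree = χ.natDegree) ∧
      (∀ χ ∈ PhiSet (trunc ν Qm) ν, ∃ χ' ∈ PhiSet (trunc ν Qm) ν, ν χ < ν χ') ∧
      (∀ χ ∈ PhiSet (trunc ν Qm) ν, trunc ν χ Q < ν Q) ∧
      ∀ Q' : K[X], Q'.Monic →
        (∀ χ ∈ PhiSet (trunc ν Qm) ν, trunc ν χ Q' < ν Q') → Q.natDegree ≤ Q'.natDegree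

/-- A continuous MacLane chain of stable degree `m`: valuations `ρ_0 < ρ_1 < ⋯`,
monic key polynomials `χ_i` (for `i ≥ 1`) of degree `m`, with
`ρ_i = [ρ_{i-1}; χ_i, β_i]`, `β_i = ρ_i (χ_i) > ρ_{i-1} (χ_i)` and
`χ_{i+1} ∤_{ρ_i} χ_i`. -/
structure MacLaneChain (K : Type*) [Field K] (Λ : Type*) [AddCommGroup Λ] [LinearOrder Λ] [IsOrderedAddMonoid Λ] where
  m : ℕ
  hm : 0 < m
  ρ : ℕ → K[X] → WithTop Λ
  χ : ℕ → K[X]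
  β : ℕ → Λ
  isVal : ∀ i : ℕ, IsValuation (ρ i)
  mono : ∀ i : ℕ, ValLT (ρ i) (ρ (i + 1))
  monicChi : ∀ i : ℕ, (χ (i + 1)).Monic
  degChi : ∀ i : ℕ, (χ (i + 1)).natDegree = m
  keyChi : ∀ i : ℕ, IsMLVKey (ρ i) (χ (i + 1))
  beta_def : ∀ i : ℕ, ρ (i + 1) (χ (i + 1)) = (β (i + 1) : WithTop Λ)
  beta_lt : ∀ i : ℕ, ρ i (χ (i + 1)) < (β (i + 1) : WithTop Λ)
  aug : ∀ i : ℕ, ρ (i + 1) = augVal (ρ i) (χ (i + 1)) (β (i + 1) : WithTop Λ)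
  not_dvd : ∀ i : ℕ, ¬ VDvd (ρ (i + 1)) (χ (i + 2)) (χ (i + 1))

/-- A polynomial is stable w.r.t. the chain if its values `ρ_i f` are eventually constant. -/
def MacLaneChain.Stable (ch : MacLaneChain K Λ) (f : K[X]) : Prop :=
  ∃ i0 : ℕ, ∀ i : ℕ, i0 ≤ i → ch.ρ i f = ch.ρ i0 f

/-- The chain is essential: non-stable polynomials exist and all have degree `> m`. -/
def MacLaneChain.Essential (ch : MacLaneChain K Λ) : Prop :=
  (∃ f : K[X], ¬ ch.Stable f) ∧ ∀ f : K[X], ¬ ch.Stable f → ch.m < f.natDegree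

/-- MLV limit key polynomials of the chain: monic non-stable polynomials of minimal
degree `m_∞`. -/
def MacLaneChain.IsLimKP (ch : MacLaneChain K Λ) (φ : K[X]) : Prop :=
  φ.Monic ∧ ¬ ch.Stable φ ∧ ∀ f : K[X], ¬ ch.Stable f → φ.natDegree ≤ f.natDegree

/-- Convex subgroup of a linearly ordered abelian group. -/
def IsConvexSubgroup (H : AddSubgroup Λ) : Prop :=
  ∀ x y : Λ, 0 < x → x < y → y ∈ H → x ∈ H

/-- The value group of a valuation: the subgroup of `Λ` generated by the finite values. -/
def valueGroup {F : Type*} [Field F] (ρ : F[X] → WithTop Λ) : AddSubgroup Λ :=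
  AddSubgroup.closure {γ : Λ | ∃ f : F[X], ρ f = (γ : WithTop Λ)}


variable [Module ℚ Λ]

/-- The multiset of values `ν̄ (x - θ)` over the roots `θ` of `f` in the algebraic
closure of `K` (with multiplicity). -/
noncomputable def rootVals (w : Polynomial (AlgebraicClosure K) → WithTop Λ) (f : K[X]) :
    Multiset (WithTop Λ) :=
  (f.map (algebraMap K (AlgebraicClosure K))).roots.map fun θ => w (X - C θ)

end KeyPolPaper

namespace Polynomial

theorem hasseDeriv_map {R S : Type*} [Semiring R] [Semiring S] (φ : R →+* S) (k : ℕ)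
    (p : R[X]) : (hasseDeriv k p).map φ = hasseDeriv k (p.map φ) := by
  ext n
  simp [coeff_map, hasseDeriv_coeff]

theorem hasseDeriv_succ_X_sub_C_mul {R : Type*} [CommRing R] (θ : R) (p : R[X]) (k : ℕ) :
    hasseDeriv (k + 1) ((X - C θ) * p) = (X - C θ) * hasseDeriv (k + 1) p + hasseDeriv k p := by
  rw [hasseDeriv_mul, Finset.Nat.sum_antidiagonal_eq_sum_range_succ_mk,
    ← Finset.sum_subset (Finset.range_subset_range.mpr (by omega : 2 ≤ k + 1 + 1))]
  · simp [Finset.sum_range_succ]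
  · intro i _ hi
    rw [hasseDeriv_eq_zero_of_lt_natDegree (X - C θ) i
      ((natDegree_X_sub_C_le θ).trans_lt (by simp at hi; omega)), zero_mul]

end Polynomial

theorem WithTop.nsmul_le_nsmul_iff {Λ : Type*} [AddCommGroup Λ] [LinearOrder Λ]
    [IsOrderedAddMonoid Λ] {n : ℕ} (hn : n ≠ 0) {x y : WithTop Λ} : n • x ≤ n • y ↔ x ≤ y := by
  have htop : n • (⊤ : WithTop Λ) = ⊤ := by
    obtain ⟨m, rfl⟩ := Nat.exists_eq_succ_of_ne_zero hn
    rw [succ_nsmul, WithTop.add_top]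
  induction x using WithTop.recTopCoe <;> induction y using WithTop.recTopCoe
  · simp
  · simp [htop, ← WithTop.coe_nsmul]
  · simp [htop]
  · rw [← WithTop.coe_nsmul, ← WithTop.coe_nsmul, WithTop.coe_le_coe, WithTop.coe_le_coe,
      nsmul_le_nsmul_iff_right hn]

namespace KeyPolPaper

variable {Λ : Type*} [AddCommGroup Λ]

/-- The value of the term `∂_b P · y ^ b` of the Taylor expansion `P (x + y) = Σ_b ∂_b P · y ^ b`
for an increment `y` of value `Γ`. -/
noncomputable def taylorTermVal {R : Type*} [Semiring R] (w : R[X] → WithTop Λ) (Γ : Λ)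
    (P : R[X]) (b : ℕ) : WithTop Λ :=
  w (hasseDeriv b P) + b • (Γ : WithTop Λ)

@[simp]
theorem taylorTermVal_zero {R : Type*} [Semiring R] (w : R[X] → WithTop Λ) (Γ : Λ) (P : R[X]) :
    taylorTermVal w Γ P 0 = w P := by
  simp [taylorTermVal]

theorem taylorTermVal_map {R S : Type*} [Semiring R] [Semiring S] (φ : R →+* S)
    {v : R[X] → WithTop Λ} {w : S[X] → WithTop Λ} (hres : ∀ g, w (g.map φ) = v g) (Γ : Λ)
    (P : R[X]) (b : ℕ) : taylorTermVal w Γ (P.map φ) b = taylorTermVal v Γ P b := by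
  rw [taylorTermVal, ← hasseDeriv_map, hres, taylorTermVal]

variable [LinearOrder Λ]

structure IsLastMinTaylorTerm {R : Type*} [Semiring R] (w : R[X] → WithTop Λ) (Γ : Λ)
    (P : R[X]) (d : ℕ) : Prop where
  le : ∀ b, w P ≤ taylorTermVal w Γ P b
  lt : ∀ b, d < b → w P < taylorTermVal w Γ P b
  eq : w P = taylorTermVal w Γ P d

theorem IsLastMinTaylorTerm.of_map {R S : Type*} [Semiring R] [Semiring S] {φ : R →+* S}
    {v : R[X] → WithTop Λ} {w : S[X] → WithTop Λ} (hres : ∀ g, w (g.map φ) = v g) {Γ : Λ}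
    {P : R[X]} {d : ℕ} (h : IsLastMinTaylorTerm w Γ (P.map φ) d) : IsLastMinTaylorTerm v Γ P d := by
  have hT := taylorTermVal_map φ hres Γ P
  exact ⟨fun b => by simpa only [hres, hT] using h.le b,
    fun b hb => by simpa only [hres, hT] using h.lt b hb, by simpa only [hres, hT] using h.eq⟩

namespace IsValuation

variable {F : Type*} [Field F] {w : F[X] → WithTop Λ}

theorem map_mul (hw : IsValuation w) (p q : F[X]) : w (p * q) = w p + w q := hw.2.1 p q

theorem min_le_map_add (hw : IsValuation w) (p q : F[X]) : min (w p) (w q) ≤ w (p + q) :=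
  hw.2.2.1 p q

theorem map_C_ne_top (hw : IsValuation w) {a : F} (ha : a ≠ 0) : w (C a) ≠ ⊤ := hw.2.2.2 a ha

theorem ne_top_of_dvd (hw : IsValuation w) {p q : F[X]} (hpq : p ∣ q) (hq : w q ≠ ⊤) :
    w p ≠ ⊤ := by
  obtain ⟨r, rfl⟩ := hpq
  rw [hw.map_mul] at hq
  exact (WithTop.add_ne_top.mp hq).1

end IsValuation

variable [IsOrderedAddMonoid Λ]

namespace IsValuation

variable {F : Type*} [Field F] {w : F[X] → WithTop Λ}

theorem map_one (hw : IsValuation w) : w 1 = 0 := by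
  have h : w 1 = w 1 + w 1 := by simpa using hw.map_mul 1 1
  lift w 1 to Λ using (by simpa using hw.map_C_ne_top one_ne_zero) with a
  norm_cast at h ⊢
  exact left_eq_add.mp h

theorem map_neg (hw : IsValuation w) (p : F[X]) : w (-p) = w p := by
  have h : w (-1) + w (-1) = 0 := by rw [← hw.map_mul, neg_one_mul, neg_neg, hw.map_one]
  lift w (-1) to Λ using (by simpa using hw.map_C_ne_top (neg_ne_zero.mpr one_ne_zero)) with a ha
  norm_cast at h
  obtain rfl : a = 0 := two_nsmul_eq_zero.mp (by rwa [two_nsmul])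
  rw [← neg_one_mul, hw.map_mul, ← ha, WithTop.coe_zero, zero_add]

theorem map_add_of_lt (hw : IsValuation w) {p q : F[X]} (h : w p < w q) : w (p + q) = w p := by
  refine le_antisymm ?_ (by simpa [h.le] using hw.min_le_map_add p q)
  have := hw.min_le_map_add (p + q) (-q)
  rw [add_neg_cancel_right, hw.map_neg] at this
  exact (min_le_iff.mp this).resolve_right h.not_ge

theorem map_add_of_ne (hw : IsValuation w) {p q : F[X]} (h : w p ≠ w q) :
    w (p + q) = min (w p) (w q) := by
  rcases h.lt_or_gt with h | h
  · rw [hw.map_add_of_lt h, min_eq_left h.le]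
  · rw [add_comm, hw.map_add_of_lt h, min_eq_right h.le]

theorem multiset_prod_ne_top (hw : IsValuation w) (s : Multiset F[X]) (hs : ∀ p ∈ s, w p ≠ ⊤) :
    w s.prod ≠ ⊤ := by
  induction s using Multiset.induction_on with
  | empty => simp [hw.map_one]
  | cons p s ih =>
    rw [Multiset.prod_cons, hw.map_mul]
    simp only [Multiset.mem_cons, forall_eq_or_imp] at hs
    exact WithTop.add_ne_top.mpr ⟨hs.1, ih hs.2⟩

theorem min_le_taylorTermVal_succ_X_sub_C_mul (hw : IsValuation w) (Γ : Λ) (θ : F) (P : F[X])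
    (k : ℕ) :
    min (w (X - C θ) + taylorTermVal w Γ P (k + 1)) (Γ + taylorTermVal w Γ P k) ≤
      taylorTermVal w Γ ((X - C θ) * P) (k + 1) := by
  have h1 : w ((X - C θ) * hasseDeriv (k + 1) P) + (k + 1) • (Γ : WithTop Λ) =
      w (X - C θ) + taylorTermVal w Γ P (k + 1) := by
    rw [hw.map_mul, taylorTermVal, add_assoc]
  have h2 : w (hasseDeriv k P) + (k + 1) • (Γ : WithTop Λ) = Γ + taylorTermVal w Γ P k := by
    rw [taylorTermVal, succ_nsmul]; abel
  rw [← h1, ← h2, min_add_add_right, taylorTermVal, hasseDeriv_succ_X_sub_C_mul]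
  gcongr
  exact hw.min_le_map_add _ _

theorem taylorTermVal_succ_X_sub_C_mul_of_ne (hw : IsValuation w) {Γ : Λ} {θ : F} {P : F[X]}
    {k : ℕ} (h : w (X - C θ) + taylorTermVal w Γ P (k + 1) ≠ Γ + taylorTermVal w Γ P k) :
    taylorTermVal w Γ ((X - C θ) * P) (k + 1) =
      min (w (X - C θ) + taylorTermVal w Γ P (k + 1)) (Γ + taylorTermVal w Γ P k) := by
  have h1 : w ((X - C θ) * hasseDeriv (k + 1) P) + (k + 1) • (Γ : WithTop Λ) =
      w (X - C θ) + taylorTermVal w Γ P (k + 1) := by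
    rw [hw.map_mul, taylorTermVal, add_assoc]
  have h2 : w (hasseDeriv k P) + (k + 1) • (Γ : WithTop Λ) = Γ + taylorTermVal w Γ P k := by
    rw [taylorTermVal, succ_nsmul]; abel
  rw [← h1, ← h2] at h ⊢
  rw [min_add_add_right, taylorTermVal, hasseDeriv_succ_X_sub_C_mul,
    hw.map_add_of_ne fun h' => h (by rw [h'])]

end IsValuation

namespace IsLastMinTaylorTerm

variable {F : Type*} [Field F] {w : F[X] → WithTop Λ} {Γ : Λ} {P : F[X]} {d : ℕ}

theorem one (hw : IsValuation w) (Γ : Λ) : IsLastMinTaylorTerm w Γ (1 : F[X]) 0 := by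
  have hb : ∀ b, 0 < b → w 1 < taylorTermVal w Γ 1 b := fun b hb => by
    rw [taylorTermVal, hasseDeriv_eq_zero_of_lt_natDegree _ b (by simpa using hb), hw.1, top_add,
      hw.map_one]
    exact WithTop.coe_lt_top 0
  refine ⟨fun b => ?_, hb, by simp⟩
  rcases b.eq_zero_or_pos with rfl | hpos
  · simp
  · exact (hb b hpos).le

theorem le_X_sub_C_mul (hw : IsValuation w) (hP : IsLastMinTaylorTerm w Γ P d) {θ : F}
    (hθ : w (X - C θ) ≤ Γ) (b : ℕ) : w ((X - C θ) * P) ≤ taylorTermVal w Γ ((X - C θ) * P) b := by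
  rcases b with _ | k
  · simp
  rw [hw.map_mul]
  exact (le_min (add_le_add_right (hP.le _) _) (add_le_add hθ (hP.le k))).trans
    (hw.min_le_taylorTermVal_succ_X_sub_C_mul Γ θ P k)

theorem X_sub_C_mul_of_eq (hw : IsValuation w) (hP : IsLastMinTaylorTerm w Γ P d) {θ : F}
    (hθ : w (X - C θ) = Γ) : IsLastMinTaylorTerm w Γ ((X - C θ) * P) (d + 1) := by
  refine ⟨hP.le_X_sub_C_mul hw hθ.le, fun b hb => ?_, ?_⟩
  · obtain ⟨k, rfl⟩ : ∃ k, b = k + 1 := ⟨b - 1, by omega⟩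
    rw [hw.map_mul, hθ]
    exact (lt_min (WithTop.add_lt_add_left WithTop.coe_ne_top (hP.lt _ (by omega)))
      (WithTop.add_lt_add_left WithTop.coe_ne_top (hP.lt k (by omega)))).trans_le
      (hθ ▸ hw.min_le_taylorTermVal_succ_X_sub_C_mul Γ θ P k)
  · have hlt : Γ + taylorTermVal w Γ P d < w (X - C θ) + taylorTermVal w Γ P (d + 1) := by
      rw [hθ, ← hP.eq]
      exact WithTop.add_lt_add_left WithTop.coe_ne_top (hP.lt _ d.lt_succ_self)
    rw [hw.taylorTermVal_succ_X_sub_C_mul_of_ne hlt.ne', min_eq_right hlt.le, hw.map_mul, hθ,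
      ← hP.eq]

theorem X_sub_C_mul_of_lt (hw : IsValuation w) (hP : IsLastMinTaylorTerm w Γ P d)
    (hPfin : w P ≠ ⊤) {θ : F} (hθ : w (X - C θ) < Γ) :
    IsLastMinTaylorTerm w Γ ((X - C θ) * P) d := by
  have hθfin : w (X - C θ) ≠ ⊤ := hθ.ne_top
  -- as `w (X - C θ) < Γ`, the summand coming from `∂_k P` is never the minimal one
  have hright (k : ℕ) : w (X - C θ) + w P < Γ + taylorTermVal w Γ P k :=
    (WithTop.add_lt_add_right hPfin hθ).trans_le (add_le_add_right (hP.le k) _)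
  refine ⟨hP.le_X_sub_C_mul hw hθ.le, fun b hb => ?_, ?_⟩
  · obtain ⟨k, rfl⟩ : ∃ k, b = k + 1 := ⟨b - 1, by omega⟩
    rw [hw.map_mul]
    exact (lt_min (WithTop.add_lt_add_left hθfin (hP.lt _ hb)) (hright k)).trans_le
      (hw.min_le_taylorTermVal_succ_X_sub_C_mul Γ θ P k)
  · rcases d with _ | k
    · simp
    have hlt : w (X - C θ) + taylorTermVal w Γ P (k + 1) < Γ + taylorTermVal w Γ P k := by
      rw [← hP.eq]; exact hright k
    rw [hw.taylorTermVal_succ_X_sub_C_mul_of_ne hlt.ne, min_eq_left hlt.le, hw.map_mul, ← hP.eq]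

end IsLastMinTaylorTerm

theorem isLastMinTaylorTerm_prod_X_sub_C {F : Type*} [Field F] {w : F[X] → WithTop Λ}
    (hw : IsValuation w) (Γ : Λ) (M : Multiset F) (hfin : ∀ θ ∈ M, w (X - C θ) ≠ ⊤)
    (hle : ∀ θ ∈ M, w (X - C θ) ≤ Γ) :
    IsLastMinTaylorTerm w Γ (M.map fun θ => X - C θ).prod
      ((M.map fun θ => w (X - C θ)).count (Γ : WithTop Λ)) := by
  induction M using Multiset.induction_on with
  | empty => simpa using IsLastMinTaylorTerm.one hw Γ
  | cons θ M ih =>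
    simp only [Multiset.mem_cons, forall_eq_or_imp] at hfin hle
    have hP := ih hfin.2 hle.2
    rw [Multiset.map_cons, Multiset.prod_cons, Multiset.map_cons, Multiset.count_cons]
    rcases hle.1.lt_or_eq with hθ | hθ
    · rw [if_neg hθ.ne']
      exact hP.X_sub_C_mul_of_lt hw (hw.multiset_prod_ne_top _ (by simpa using hfin.2)) hθ
    · rw [if_pos hθ.symm]
      exact hP.X_sub_C_mul_of_eq hw hθ

section Eps

variable {K : Type*} [Field K] {ν : K[X] → WithTop Λ} {f : K[X]}

theorem IsEps.unique {e e' : WithTop Λ} (h : IsEps ν f e) (h' : IsEps ν f e') : e = e' := by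
  have key {e e' : WithTop Λ} (hf : ν f ≠ ⊤) (hex : ∃ b, 1 ≤ b ∧ ν f = ν (hasseDeriv b f) + b • e)
      (hle : ∀ b, 1 ≤ b → ν f ≤ ν (hasseDeriv b f) + b • e') : e ≤ e' := by
    obtain ⟨b, hb, heq⟩ := hex
    have hc : ν (hasseDeriv b f) ≠ ⊤ := fun h => hf (by rw [heq, h, top_add])
    have := hle b hb
    rwa [heq, WithTop.add_le_add_iff_left hc, WithTop.nsmul_le_nsmul_iff (by omega)] at this
  rcases h with ⟨hf, rfl⟩ | ⟨hf, hle, hex⟩ <;> rcases h' with ⟨hf', rfl⟩ | ⟨hf', hle', hex'⟩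
  · rfl
  · exact absurd hf hf'
  · exact absurd hf' hf
  · exact le_antisymm (key hf hex hle') (key hf hex' hle)

theorem eps_eq_of_isEps {e : WithTop Λ} (h : IsEps ν f e) : eps ν f = e := by
  have hex : ∃ e, IsEps ν f e := ⟨e, h⟩
  rw [eps, dif_pos hex]
  exact hex.choose_spec.unique h

namespace IsLastMinTaylorTerm

variable {Γ : Λ} {d : ℕ}

theorem eps_eq (h : IsLastMinTaylorTerm ν Γ f d) (hd : 1 ≤ d) (hf : ν f ≠ ⊤) : eps ν f = Γ :=
  eps_eq_of_isEps (Or.inr ⟨hf, fun b _ => h.le b, d, hd, h.eq⟩)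

theorem isGreatest_epsAttain (h : IsLastMinTaylorTerm ν Γ f d) (hd : 1 ≤ d) (hf : ν f ≠ ⊤) :
    IsGreatest (epsAttain ν f) d := by
  have heps := h.eps_eq hd hf
  refine ⟨⟨hd, heps ▸ h.eq⟩, fun b ⟨_, hb⟩ => not_lt.mp fun hdb => (h.lt b hdb).ne ?_⟩
  rw [heps] at hb
  exact hb

end IsLastMinTaylorTerm

end Eps

end KeyPolPaper

namespace KeyPolPaper

variable {K : Type*} [Field K] {Λ : Type*} [AddCommGroup Λ] [LinearOrder Λ] [IsOrderedAddMonoid Λ]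

variable [Module ℚ Λ]

open Classical in
theorem stmt0_general (ν : K[X] → WithTop Λ)
    (f : K[X]) (hf_monic : f.Monic) (hf_deg : 0 < f.natDegree) (hf_fin : ν f ≠ ⊤)
    (w : Polynomial (AlgebraicClosure K) → WithTop Λ) (hw : IsValuation w)
    (hres : ∀ g : K[X], w (g.map (algebraMap K (AlgebraicClosure K))) = ν g) :
    (eps ν f ∈ rootVals w f ∧ ∀ v ∈ rootVals w f, v ≤ eps ν f) ∧
      IsGreatest (epsAttain ν f) (Multiset.count (eps ν f) (rootVals w f)) := by
  set fb := f.map (algebraMap K (AlgebraicClosure K))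
  have hfb : (fb.roots.map fun θ => X - C θ).prod = fb :=
    ((IsAlgClosed.splits fb).eq_prod_roots_of_monic (hf_monic.map _)).symm
  have hfin : ∀ θ ∈ fb.roots, w (X - C θ) ≠ ⊤ := fun θ hθ =>
    hw.ne_top_of_dvd (dvd_iff_isRoot.mpr (isRoot_of_mem_roots hθ)) (by rw [hres]; exact hf_fin)
  have hroots : fb.roots ≠ 0 := by
    rw [← Multiset.card_pos, IsAlgClosed.card_roots_eq_natDegree, hf_monic.natDegree_map]
    exact hf_deg
  obtain ⟨θ₀, hθ₀, hmax⟩ := fb.roots.exists_max_image (fun θ => w (X - C θ)) hroots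
  lift w (X - C θ₀) to Λ using hfin θ₀ hθ₀ with Γ hΓ
  have hΓmem : (Γ : WithTop Λ) ∈ rootVals w f := hΓ ▸ Multiset.mem_map_of_mem _ hθ₀
  have hd : 1 ≤ (rootVals w f).count (Γ : WithTop Λ) := Multiset.one_le_count_iff_mem.mpr hΓmem
  have hterm : IsLastMinTaylorTerm ν Γ f ((rootVals w f).count (Γ : WithTop Λ)) := by
    have := isLastMinTaylorTerm_prod_X_sub_C hw Γ fb.roots hfin hmax
    rw [hfb] at this
    exact this.of_map hres
  rw [hterm.eps_eq hd hf_fin]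
  refine ⟨⟨hΓmem, fun v hv => ?_⟩, hterm.isGreatest_epsAttain hd hf_fin⟩
  obtain ⟨θ, hθ, rfl⟩ := Multiset.mem_map.mp hv
  exact hmax θ hθ

open Classical in
/-- `ε(f)` is the maximum of `ν̄(x - θ)` over the roots `θ` of `f` in `K̄`,
and the multiplicity of `ε(f)` in this multiset equals `max I(f)`. -/
theorem stmt0 (ν : K[X] → WithTop Λ) (hν : IsValuation ν)
    (f : K[X]) (hf_monic : f.Monic) (hf_deg : 0 < f.natDegree) (hf_fin : ν f ≠ ⊤)
    (w : Polynomial (AlgebraicClosure K) → WithTop Λ) (hw : IsValuation w)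
    (hres : ∀ g : K[X], w (g.map (algebraMap K (AlgebraicClosure K))) = ν g) :
    (eps ν f ∈ rootVals w f ∧ ∀ v ∈ rootVals w f, v ≤ eps ν f) ∧
      IsGreatest (epsAttain ν f) (Multiset.count (eps ν f) (rootVals w f)) :=
  stmt0_general ν f hf_monic hf_deg hf_fin w hw hres

end KeyPolPaper
end

section
/- Let ν be a valuation on K[x], let Q ∈ K[x] be an (abstract) key polynomial for ν, and let f ∈ K[x] be a non-constant polynomial with ε(f) < ε(Q). Write the division with remainder f = a + qQ in K[x] with deg a < deg Q. Then ν(f) = ν(a) < ν(qQ). -/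
/-
Write `f = a + p` with `p = qQ` and suppose `ν p ≤ ν a`, so that `ν p ≤ ν f`. Taking in both
factors the largest index attaining `ε`, one term of Leibniz's formula dominates; this shows
`ε(qQ) ≥ ε(Q)`: some `b ≥ 1` has `ν (∂_b p) + b ε(Q) ≤ ν p`. Both `g = f` and `g = a` satisfy
`ε(g) < ε(Q)` (for `a` because `Q` is a key polynomial) and `ν p ≤ ν g`, which forces
`ν (∂_b g) > ν (∂_b p)`. As `∂_b p = ∂_b f - ∂_b a`, this is impossible.
-/

open Polynomial

namespace KeyPolPaper

variable {K : Type*} [Field K] {Λ : Type*} [AddCommGroup Λ] [LinearOrder Λ] [IsOrderedAddMonoid Λ]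

lemma nsmul_top {Γ : Type*} [LinearOrderedAddCommMonoidWithTop Γ] {b : ℕ} (hb : b ≠ 0) :
    b • (⊤ : Γ) = ⊤ := by
  obtain ⟨n, rfl⟩ := Nat.exists_eq_succ_of_ne_zero hb
  rw [succ_nsmul, add_top]

theorem _root_.AddValuation.map_sum_eq_of_lt {R Γ₀ : Type*} [Ring R]
    [LinearOrderedAddCommMonoidWithTop Γ₀] (v : AddValuation R Γ₀) {ι : Type*} [DecidableEq ι]
    {s : Finset ι} {f : ι → R} {j : ι} (hj : j ∈ s) (hf : ∀ i ∈ s \ {j}, v (f j) < v (f i)) :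
    v (∑ i ∈ s, f i) = v (f j) :=
  Valuation.map_sum_eq_of_lt v hj hf

lemma IsValuation.exists_addValuation {ν : K[X] → WithTop Λ} (hν : IsValuation ν) :
    ∃ v : AddValuation K[X] (WithTop Λ), ⇑v = ν := by
  have hfin : ν 1 ≠ ⊤ := by simpa using hν.2.2.2 1 one_ne_zero
  have hsq : ν 1 = ν 1 + ν 1 := by rw [← hν.2.1, one_mul]
  have h1 : ν 1 = 0 := by
    lift ν 1 to Λ using hfin with x
    exact_mod_cast left_eq_add.mp (by exact_mod_cast hsq : x = x + x)
  exact ⟨AddValuation.of ν hν.1 h1 hν.2.2.1 hν.2.1, rfl⟩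

section EpsLE

open Finset.HasAntidiagonal

variable (v : AddValuation K[X] (WithTop Λ))

/-- For nonconstant `g` with `v g ≠ ⊤`, this says `ε(g) ≤ e`. -/
def EpsLE (g : K[X]) (e : Λ) : Prop :=
  ∀ b : ℕ, v g ≤ v (hasseDeriv b g) + b • (e : WithTop Λ)

open Classical in
/-- When `e = ε(g)`, this is the largest element of `I(g) ∪ {0}`. -/
noncomputable def topIndex (g : K[X]) (e : Λ) : ℕ :=
  Nat.findGreatest (fun b => v g = v (hasseDeriv b g) + b • (e : WithTop Λ)) g.natDegree

variable {v} {g h : K[X]} {e e' : Λ}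

lemma EpsLE.mono (hge : EpsLE v g e) (he : e ≤ e') : EpsLE v g e' :=
  fun b => (hge b).trans (by gcongr; exact_mod_cast he)

lemma epsLE_of_natDegree_eq_zero (hg : g.natDegree = 0) (e : Λ) : EpsLE v g e := by
  intro b
  rcases b.eq_zero_or_pos with rfl | hb
  · simp
  · rw [eq_C_of_natDegree_eq_zero hg, hasseDeriv_C b _ hb, v.map_zero, top_add]
    exact le_top

lemma isEps_coe_iff :
    IsEps v g e ↔ v g ≠ ⊤ ∧ EpsLE v g e ∧
      ∃ b, 1 ≤ b ∧ v g = v (hasseDeriv b g) + b • (e : WithTop Λ) := by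
  have hb0 : ∀ P : ℕ → Prop, P 0 → ((∀ b, 1 ≤ b → P b) ↔ ∀ b, P b) := fun P h0 =>
    ⟨fun h b => b.eq_zero_or_pos.elim (· ▸ h0) (h b), fun h b _ => h b⟩
  simp only [IsEps, WithTop.coe_ne_top, and_false, false_or, EpsLE,
    hb0 (fun b => v g ≤ v (hasseDeriv b g) + b • (e : WithTop Λ)) (by simp)]

lemma isEps_of_eps_eq_coe (hε : eps v g = e) : IsEps v g e := by
  unfold eps at hε
  split_ifs at hε with hex
  · exact hε ▸ hex.choose_spec
  · exact absurd hε WithTop.top_ne_coe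

lemma IsEps.ne_top {x : WithTop Λ} (hx : IsEps v g x) (hg : v g ≠ ⊤) : x ≠ ⊤ := by
  rintro rfl
  obtain ⟨-, -, b, hb, hbg⟩ := hx.resolve_left fun h => hg h.1
  rw [nsmul_top (by omega), add_top] at hbg
  exact hg hbg

lemma val_eq_hasseDeriv_topIndex (g : K[X]) (e : Λ) :
    v g = v (hasseDeriv (topIndex v g e) g) + topIndex v g e • (e : WithTop Λ) :=
  Nat.findGreatest_spec (P := fun b => v g = v (hasseDeriv b g) + b • (e : WithTop Λ))
    (Nat.zero_le _) (by simp)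

lemma le_topIndex {b : ℕ} (hg : v g ≠ ⊤)
    (hb : v g = v (hasseDeriv b g) + b • (e : WithTop Λ)) : b ≤ topIndex v g e := by
  refine Nat.le_findGreatest ?_ hb
  by_contra! hlt
  rw [hasseDeriv_eq_zero_of_lt_natDegree g b hlt, v.map_zero, top_add] at hb
  exact hg hb

lemma lt_add_of_topIndex_lt {i : ℕ} (hg : v g ≠ ⊤) (hge : EpsLE v g e)
    (hi : topIndex v g e < i) : v g < v (hasseDeriv i g) + i • (e : WithTop Λ) :=
  (hge i).lt_of_ne fun h => hi.not_ge (le_topIndex hg h)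

lemma val_mul_eq_hasseDeriv_topIndex_add (hg : v g ≠ ⊤) (hh : v h ≠ ⊤) (hge : EpsLE v g e)
    (hhe : EpsLE v h e) :
    v (g * h) = v (hasseDeriv (topIndex v g e + topIndex v h e) (g * h)) +
      (topIndex v g e + topIndex v h e) • (e : WithTop Λ) := by
  classical
  set i₀ := topIndex v g e
  set j₀ := topIndex v h e
  have hweight : ∀ ij ∈ antidiagonal (i₀ + j₀),
      v (hasseDeriv ij.1 g * hasseDeriv ij.2 h) + (i₀ + j₀) • (e : WithTop Λ) =
        (v (hasseDeriv ij.1 g) + ij.1 • (e : WithTop Λ)) +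
          (v (hasseDeriv ij.2 h) + ij.2 • (e : WithTop Λ)) := by
    rintro ⟨i, j⟩ hij
    rw [mem_antidiagonal] at hij
    rw [← hij, v.map_mul, add_nsmul]
    abel
  have hmain : v (hasseDeriv i₀ g * hasseDeriv j₀ h) + (i₀ + j₀) • (e : WithTop Λ) =
      v (g * h) := by
    rw [hweight (i₀, j₀) (mem_antidiagonal.2 rfl), v.map_mul, ← val_eq_hasseDeriv_topIndex,
      ← val_eq_hasseDeriv_topIndex]
  -- The term `∂_i₀ g * ∂_j₀ h` of Leibniz's formula strictly dominates all the others.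
  have hlt : ∀ ij ∈ antidiagonal (i₀ + j₀) \ {(i₀, j₀)},
      v (hasseDeriv i₀ g * hasseDeriv j₀ h) < v (hasseDeriv ij.1 g * hasseDeriv ij.2 h) := by
    rintro ⟨i, j⟩ hij
    obtain ⟨hij, hne⟩ := Finset.mem_sdiff.1 hij
    rw [← WithTop.add_lt_add_iff_right (z := (i₀ + j₀) • (e : WithTop Λ))
      (WithTop.coe_nsmul e _ ▸ WithTop.coe_ne_top), hmain, hweight _ hij, v.map_mul]
    rw [mem_antidiagonal] at hij
    rcases lt_or_ge i₀ i with hi | hi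
    · exact WithTop.add_lt_add_of_lt_of_le hh (lt_add_of_topIndex_lt hg hge hi) (hhe j)
    · have hj : j₀ < j := by
        by_contra! hj
        exact hne (by simp only [Finset.mem_singleton, Prod.mk.injEq]; omega)
      exact WithTop.add_lt_add_of_le_of_lt hg (hge i) (lt_add_of_topIndex_lt hh hhe hj)
  rw [hasseDeriv_mul, v.map_sum_eq_of_lt (mem_antidiagonal.2 rfl) hlt, hmain]

lemma exists_hasseDeriv_mul_eq (hg : v g ≠ ⊤) (hh : v h ≠ ⊤) (hge : EpsLE v g e)
    (hhe : EpsLE v h e)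
    (hatt : ∃ b, 1 ≤ b ∧ v h = v (hasseDeriv b h) + b • (e : WithTop Λ)) :
    ∃ b, 1 ≤ b ∧ v (g * h) = v (hasseDeriv b (g * h)) + b • (e : WithTop Λ) := by
  obtain ⟨b, hb, hbh⟩ := hatt
  have := le_topIndex hh hbh
  exact ⟨_, by omega, val_mul_eq_hasseDeriv_topIndex_add hg hh hge hhe⟩

lemma val_hasseDeriv_lt_of_epsLE {p : K[X]} {b : ℕ} (hb : 1 ≤ b) (hge : EpsLE v g e)
    (he : e < e') (hp : v (hasseDeriv b p) ≠ ⊤)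
    (hbp : v (hasseDeriv b p) + b • (e' : WithTop Λ) ≤ v p) (hpg : v p ≤ v g) :
    v (hasseDeriv b p) < v (hasseDeriv b g) := by
  by_contra! hle
  refine lt_irrefl (v g) ?_
  calc v g ≤ v (hasseDeriv b g) + b • (e : WithTop Λ) := hge b
    _ ≤ v (hasseDeriv b p) + b • (e : WithTop Λ) := by gcongr
    _ < v (hasseDeriv b p) + b • (e' : WithTop Λ) := by
      refine WithTop.add_lt_add_left hp ?_
      exact_mod_cast nsmul_lt_nsmul_right (by omega) he
    _ ≤ v g := hbp.trans hpg

lemma IsKeyPoly.exists_epsLE_lt {Q : K[X]} (hQ : IsKeyPoly v Q) {εQ : Λ} (hεQ : eps v Q = εQ)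
    (hg : g.natDegree < Q.natDegree) (he : e < εQ) : ∃ e' < εQ, EpsLE v g e' := by
  rcases Nat.eq_zero_or_pos g.natDegree with h0 | hpos
  · exact ⟨e, he, epsLE_of_natDegree_eq_zero h0 e⟩
  have hgQ := hQ.2.2 g hpos hg
  obtain ⟨εg, hεg⟩ := WithTop.ne_top_iff_exists.1 hgQ.ne_top
  rw [← hεg, hεQ] at hgQ
  exact ⟨εg, by exact_mod_cast hgQ, (isEps_coe_iff.1 (isEps_of_eps_eq_coe hεg.symm)).2.1⟩

lemma val_C_ne_top {c : K} (hc : c ≠ 0) : v (C c) ≠ ⊤ := by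
  have h : v (C c) + v (C c⁻¹) = 0 := by
    rw [← v.map_mul, ← C_mul, mul_inv_cancel₀ hc, C_1, v.map_one]
  intro htop
  simp [htop] at h

end EpsLE

variable [Module ℚ Λ]

section Divisible

variable {v : AddValuation K[X] (WithTop Λ)} {g : K[X]}

lemma exists_isEps {f : K[X]} (hf : 0 < f.natDegree) (hvf : v f ≠ ⊤) :
    ∃ e : Λ, IsEps v f e := by
  classical
  obtain ⟨F, hF⟩ := WithTop.ne_top_iff_exists.1 hvf
  set S := (Finset.Icc 1 f.natDegree).filter fun b => v (hasseDeriv b f) ≠ ⊤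
  have hS : f.natDegree ∈ S := by
    simp [S, Nat.succ_le_of_lt hf, hasseDeriv_natDegree_eq_C, val_C_ne_top,
      ne_zero_of_natDegree_gt hf]
  have hD : ∀ b ∈ S, ∃ D : Λ, v (hasseDeriv b f) = D := fun b hb =>
    (WithTop.ne_top_iff_exists.1 (Finset.mem_filter.1 hb).2).imp fun _ h => h.symm
  choose! D hD using hD
  let slope (b : ℕ) : Λ := (b : ℚ)⁻¹ • (F - D b)
  have hslope : ∀ b ∈ S, v f = v (hasseDeriv b f) + b • (slope b : WithTop Λ) := by
    intro b hb
    have hb0 : (b : ℚ) ≠ 0 :=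
      Nat.cast_ne_zero.2 (by have := (Finset.mem_Icc.1 (Finset.mem_filter.1 hb).1).1; omega)
    rw [hD b hb, ← hF, ← WithTop.coe_nsmul, ← WithTop.coe_add, ← Nat.cast_smul_eq_nsmul ℚ,
      smul_inv_smul₀ hb0, add_sub_cancel]
  refine ⟨S.sup' ⟨_, hS⟩ slope, isEps_coe_iff.2 ⟨hvf, fun b => ?_, ?_⟩⟩
  · by_cases hb : b ∈ S
    · rw [hslope b hb]
      gcongr
      exact_mod_cast S.le_sup' slope hb
    rcases b.eq_zero_or_pos with rfl | hb0
    · simp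
    have htop : v (hasseDeriv b f) = ⊤ := by
      by_contra hne
      refine hb (Finset.mem_filter.2 ⟨Finset.mem_Icc.2 ⟨hb0, ?_⟩, hne⟩)
      by_contra! hlt
      exact hne (by rw [hasseDeriv_eq_zero_of_lt_natDegree f b hlt, v.map_zero])
    rw [htop, top_add]
    exact le_top
  · obtain ⟨b, hb, hmax⟩ := S.exists_mem_eq_sup' ⟨_, hS⟩ slope
    exact ⟨b, (Finset.mem_Icc.1 (Finset.mem_filter.1 hb).1).1, hmax ▸ hslope b hb⟩

lemma eps_ne_top (hg : 0 < g.natDegree) (hvg : v g ≠ ⊤) : eps v g ≠ ⊤ := by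
  obtain ⟨e, he⟩ := exists_isEps hg hvg
  have hex : ∃ x : WithTop Λ, IsEps v g x := ⟨e, he⟩
  unfold eps
  rw [dif_pos hex]
  exact hex.choose_spec.ne_top hvg

lemma exists_hasseDeriv_mul_add_le {q Q : K[X]} {εQ : Λ} (hεQ : eps v Q = εQ)
    (hqQ : v (q * Q) ≠ ⊤) :
    ∃ b, 1 ≤ b ∧ v (hasseDeriv b (q * Q)) + b • (εQ : WithTop Λ) ≤ v (q * Q) := by
  obtain ⟨hq, hQ⟩ := WithTop.add_ne_top.1 (v.map_mul q Q ▸ hqQ)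
  obtain ⟨-, hQε, hQatt⟩ := isEps_coe_iff.1 (isEps_of_eps_eq_coe hεQ)
  by_cases hqεQ : EpsLE v q εQ
  · obtain ⟨b, hb, hbeq⟩ := exists_hasseDeriv_mul_eq hq hQ hqεQ hQε hQatt
    exact ⟨b, hb, hbeq.ge⟩
  have hqdeg : 0 < q.natDegree :=
    Nat.pos_of_ne_zero fun h0 => hqεQ (epsLE_of_natDegree_eq_zero h0 εQ)
  obtain ⟨εq, hεq⟩ := WithTop.ne_top_iff_exists.1 (eps_ne_top hqdeg hq)
  obtain ⟨-, hqε, hqatt⟩ := isEps_coe_iff.1 (isEps_of_eps_eq_coe hεq.symm)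
  have hle : εQ ≤ εq := le_of_not_ge fun h => hqεQ (hqε.mono h)
  obtain ⟨b, hb, hbeq⟩ := exists_hasseDeriv_mul_eq hQ hq (hQε.mono hle) hqε hqatt
  rw [mul_comm] at hbeq
  refine ⟨b, hb, ?_⟩
  calc v (hasseDeriv b (q * Q)) + b • (εQ : WithTop Λ)
      ≤ v (hasseDeriv b (q * Q)) + b • (εq : WithTop Λ) := by gcongr; exact_mod_cast hle
    _ = v (q * Q) := hbeq.symm

end Divisible

theorem stmt2_general (ν : K[X] → WithTop Λ) (hν : IsValuation ν)
    (Q : K[X]) (hQ : IsKeyPoly ν Q)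
    (f : K[X]) (hef : eps ν f < eps ν Q) :
    ν f = ν (f %ₘ Q) ∧ ν (f %ₘ Q) < ν (f /ₘ Q * Q) := by
  obtain ⟨v, rfl⟩ := hν.exists_addValuation
  set a := f %ₘ Q
  set p := f /ₘ Q * Q
  have hap : a + p = f := by
    rw [show p = Q * (f /ₘ Q) from mul_comm _ _]
    exact modByMonic_add_div f Q
  suffices hlt : v a < v p from ⟨by rw [← hap]; exact v.map_add_eq_of_lt_left hlt, hlt⟩
  by_contra! hpa
  obtain ⟨εf, hεf⟩ := WithTop.ne_top_iff_exists.1 hef.ne_top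
  obtain ⟨hvf, hfε, -⟩ := isEps_coe_iff.1 (isEps_of_eps_eq_coe hεf.symm)
  have hpf : v p ≤ v f := hap ▸ v.map_le_add hpa le_rfl
  have hvp : v p ≠ ⊤ := ne_top_of_le_ne_top hvf hpf
  have hvQ : v Q ≠ ⊤ := (WithTop.add_ne_top.1 (v.map_mul _ Q ▸ hvp)).2
  obtain ⟨εQ, hεQ⟩ := WithTop.ne_top_iff_exists.1 (eps_ne_top hQ.2.1 hvQ)
  have hfQ : εf < εQ := by rw [← hεf, ← hεQ] at hef; exact_mod_cast hef
  obtain ⟨εa, haQ, haε⟩ := hQ.exists_epsLE_lt hεQ.symm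
    (natDegree_modByMonic_lt f hQ.1 (hQ.1.natDegree_pos.1 hQ.2.1)) hfQ
  obtain ⟨b, hb, hbp⟩ := exists_hasseDeriv_mul_add_le hεQ.symm hvp
  have hDp : v (hasseDeriv b p) ≠ ⊤ := (WithTop.add_ne_top.1 (ne_top_of_le_ne_top hvp hbp)).1
  have hfD := val_hasseDeriv_lt_of_epsLE hb hfε hfQ hDp hbp hpf
  have haD := val_hasseDeriv_lt_of_epsLE hb haε haQ hDp hbp hpa
  have hsub : hasseDeriv b p = hasseDeriv b f - hasseDeriv b a := by rw [← hap, map_add]; abel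
  exact (lt_min hfD haD).not_ge (hsub ▸ v.map_sub _ _)

/-- if `Q` is a key polynomial for `ν` and `ε(f) < ε(Q)`, then writing
`f = a + q Q` with `deg a < deg Q`, one has `ν f = ν a < ν (q Q)`. -/
theorem stmt2 (ν : K[X] → WithTop Λ) (hν : IsValuation ν)
    (Q : K[X]) (hQ : IsKeyPoly ν Q)
    (f : K[X]) (hf : 0 < f.natDegree) (hef : eps ν f < eps ν Q) :
    ν f = ν (f %ₘ Q) ∧ ν (f %ₘ Q) < ν (f /ₘ Q * Q) :=
  stmt2_general ν hν Q hQ f hef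

end KeyPolPaper
end
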